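/- Let H be an infinite-dimensional real Hilbert space. The unit sphere S = {x ∈ H : ‖x‖ = 1} is contractible. -/
import Mathlib

open scoped RealInnerProductSpace
open Metric
open scoped Classical

section Shift

variable {ι : Type*} (g : ℕ ↪ ι)

/-- A "shift" map: on the range of `g` it shifts, elsewhere it is the identity. -/
noncomputable def shiftMap (j : ι) : ι :=
  if h : ∃ n, g n = j then g (h.choose + 1) else j

lemma shiftMap_apply_g (n : ℕ) : shiftMap g (g n) = g (n + 1) := by
  have h : ∃ m, g m = g n := ⟨n, rfl⟩
  have hc : h.choose = n := g.injective h.choose_spec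
  simp [shiftMap, dif_pos h, hc]

lemma shiftMap_apply_of_notMem {j : ι} (hj : ¬ ∃ n, g n = j) : shiftMap g j = j := by
  simp [shiftMap, dif_neg hj]

lemma shiftMap_mem_range (j : ι) : ∃ n, g n = shiftMap g j → True := ⟨0, fun _ => trivial⟩

lemma shiftMap_injective : Function.Injective (shiftMap g) := by
  intro j k hjk
  by_cases hj : ∃ n, g n = j <;> by_cases hk : ∃ n, g n = k
  · obtain ⟨n, rfl⟩ := hj; obtain ⟨m, rfl⟩ := hk
    rw [shiftMap_apply_g, shiftMap_apply_g] at hjk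
    exact congrArg g (Nat.succ_injective (g.injective hjk))
  · exfalso
    rw [shiftMap_apply_of_notMem g hk] at hjk
    obtain ⟨n, rfl⟩ := hj
    rw [shiftMap_apply_g] at hjk
    exact hk ⟨n + 1, hjk⟩
  · exfalso
    rw [shiftMap_apply_of_notMem g hj] at hjk
    obtain ⟨m, rfl⟩ := hk
    rw [shiftMap_apply_g] at hjk
    exact hj ⟨m + 1, hjk.symm⟩
  · rwa [shiftMap_apply_of_notMem g hj, shiftMap_apply_of_notMem g hk] at hjk

lemma shiftMap_ne_g_zero (j : ι) : shiftMap g j ≠ g 0 := by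
  by_cases hj : ∃ n, g n = j
  · obtain ⟨n, rfl⟩ := hj
    rw [shiftMap_apply_g]
    intro h
    exact Nat.succ_ne_zero n (g.injective h)
  · rw [shiftMap_apply_of_notMem g hj]
    intro h
    exact hj ⟨0, h.symm⟩

lemma shiftMap_vanish (f : ι → ℝ) (h0 : f (g 0) = 0)
    (hrec : ∀ k, f (shiftMap g k) = - f k) : ∀ j, f j = 0 := by
  intro j
  by_cases hj : ∃ n, g n = j
  · obtain ⟨n, rfl⟩ := hj
    induction n with
    | zero => exact h0
    | succ n ih =>
      have := hrec (g n)
      rw [shiftMap_apply_g] at this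
      rw [this, ih]
      ring
  · have := hrec j
    rw [shiftMap_apply_of_notMem g hj] at this
    linarith

end Shift

section Iso

variable {H : Type*} [NormedAddCommGroup H] [InnerProductSpace ℝ H] [CompleteSpace H]

lemma exists_shift_isometry (h : ¬ FiniteDimensional ℝ H) :
    ∃ (T : H →ₗᵢ[ℝ] H) (e : H), ‖e‖ = 1 ∧ (∀ x : H, ⟪e, T x⟫ = 0) ∧
      (∀ x : H, x ≠ 0 → T x ≠ -x) := by
  obtain ⟨w, b, hb⟩ := exists_hilbertBasis ℝ H
  have hinf : Infinite ↥w := by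
    by_contra hfin
    rw [not_infinite_iff_finite] at hfin
    have hwfin : w.Finite := Set.toFinite w
    have hspan : FiniteDimensional ℝ (Submodule.span ℝ w) :=
      FiniteDimensional.span_of_finite ℝ hwfin
    have hclosed : IsClosed ((Submodule.span ℝ w : Submodule ℝ H) : Set H) :=
      Submodule.closed_of_finiteDimensional _
    have htop : (Submodule.span ℝ w : Submodule ℝ H) = ⊤ := by
      rw [← hclosed.submodule_topologicalClosure_eq]
      have := b.dense_span
      rwa [hb, Subtype.range_coe] at this
    haveI : FiniteDimensional ℝ (⊤ : Submodule ℝ H) := htop ▸ hspan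
    exact h Submodule.topEquiv.finiteDimensional
  haveI := hinf
  set g : ℕ ↪ ↥w := Infinite.natEmbedding ↥w with hg
  have horth : Orthonormal ℝ (fun i : ↥w => b (shiftMap g i)) :=
    b.orthonormal.comp _ (shiftMap_injective g)
  have hV := horth.orthogonalFamily
  let T : H →ₗᵢ[ℝ] H := hV.linearIsometry.comp b.repr.toLinearIsometry
  have hsum : ∀ x : H, HasSum (fun i => b.repr x i • b (shiftMap g i)) (T x) := by
    intro x
    have := hV.hasSum_linearIsometry (b.repr x)
    simpa [LinearIsometry.toSpanSingleton_apply, T] using this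
  have h1 : ∀ (j : ↥w) (x : H),
      HasSum (fun i => b.repr x i * (if j = shiftMap g i then (1:ℝ) else 0)) ⟪b j, T x⟫ := by
    intro j x
    have h2 := ((innerSL ℝ (b j)).hasSum (hsum x))
    have h3 : ∀ i : ↥w, (innerSL ℝ (b j)) (b.repr x i • b (shiftMap g i))
        = b.repr x i * (if j = shiftMap g i then (1:ℝ) else 0) := by
      intro i
      rw [innerSL_apply_apply, real_inner_smul_right,
        orthonormal_iff_ite.mp b.orthonormal j (shiftMap g i)]
    simpa [h3] using h2
  have key0 : ∀ x : H, ⟪b (g 0), T x⟫ = 0 := by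
    intro x
    refine (h1 (g 0) x).unique ?_
    have : (fun i : ↥w => b.repr x i * (if g 0 = shiftMap g i then (1:ℝ) else 0))
        = fun _ => (0:ℝ) := by
      funext i
      rw [if_neg (fun hc => shiftMap_ne_g_zero g i hc.symm), mul_zero]
    rw [this]
    exact hasSum_zero
  have keyσ : ∀ (x : H) (k : ↥w), ⟪b (shiftMap g k), T x⟫ = b.repr x k := by
    intro x k
    refine (h1 (shiftMap g k) x).unique ?_
    have : (fun i : ↥w => b.repr x i * (if shiftMap g k = shiftMap g i then (1:ℝ) else 0))
        = fun i => if i = k then b.repr x k else 0 := by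
      funext i
      by_cases hik : i = k
      · subst hik; simp
      · rw [if_neg (fun hc => hik (shiftMap_injective g hc.symm)), mul_zero, if_neg hik]
    rw [this]
    exact hasSum_ite_eq k _
  refine ⟨T, b (g 0), b.orthonormal.1 (g 0), key0, ?_⟩
  intro x hx hTx
  have hj : ∀ j : ↥w, ⟪b j, T x⟫ = -(b.repr x j) := by
    intro j
    rw [hTx, inner_neg_right, b.repr_apply_apply]
  have hvan : ∀ j : ↥w, b.repr x j = 0 := by
    refine shiftMap_vanish g _ ?_ ?_
    · have := key0 x
      rw [hj (g 0)] at this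
      linarith
    · intro k
      have := keyσ x k
      rw [hj (shiftMap g k)] at this
      linarith
  apply hx
  have : b.repr x = 0 := lp.ext (by funext j; simpa using hvan j)
  exact b.repr.map_eq_zero_iff.mp this

end Iso

section Main

variable {H : Type*} [NormedAddCommGroup H] [InnerProductSpace ℝ H]

/-- Normalization of a nonzero vector, as an element of the unit sphere. -/
noncomputable def sphNormalize (v : H) (hv : v ≠ 0) : Metric.sphere (0 : H) 1 :=
  ⟨‖v‖⁻¹ • v, by
    rw [mem_sphere_zero_iff_norm, norm_smul, norm_inv, norm_norm,
      inv_mul_cancel₀ (norm_ne_zero_iff.mpr hv)]⟩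

lemma sphNormalize_of_norm_one {v : H} (hv : ‖v‖ = 1) (h0 : v ≠ 0) :
    (sphNormalize v h0 : H) = v := by
  simp [sphNormalize, hv]

lemma continuous_sphNormalize {X : Type*} [TopologicalSpace X] {F : X → H}
    (hF : Continuous F) (h0 : ∀ p, F p ≠ 0) :
    Continuous (fun p => sphNormalize (F p) (h0 p)) := by
  apply Continuous.subtype_mk
  exact ((hF.norm).inv₀ (fun p => norm_ne_zero_iff.mpr (h0 p))).smul hF

end Main

theorem sphere_contractible_of_infinite_dimensional
    {H : Type*} [NormedAddCommGroup H] [InnerProductSpace ℝ H] [CompleteSpace H]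
    (h : ¬ FiniteDimensional ℝ H) :
    ContractibleSpace (Metric.sphere (0 : H) 1) := by
  obtain ⟨T, e, he, hTe, hT⟩ := exists_shift_isometry h
  set S := Metric.sphere (0 : H) 1 with hS
  have hnorm : ∀ x : S, ‖(x : H)‖ = 1 := fun x => mem_sphere_zero_iff_norm.mp x.2
  have hne : ∀ x : S, (x : H) ≠ 0 := fun x => by
    intro h0; have := hnorm x; rw [h0, norm_zero] at this; norm_num at this
  -- the intermediate map x ↦ T x and the target point e
  have hTnorm : ∀ x : S, ‖T (x : H)‖ = 1 := fun x => by rw [T.norm_map]; exact hnorm x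
  let g₁ : C(S, S) := ⟨fun x => ⟨T x, mem_sphere_zero_iff_norm.mpr (hTnorm x)⟩,
    Continuous.subtype_mk (T.continuous.comp continuous_subtype_val) _⟩
  let pt : S := ⟨e, mem_sphere_zero_iff_norm.mpr he⟩
  -- first homotopy : id to g₁
  let F₁ : unitInterval × S → H := fun p => (1 - (p.1 : ℝ)) • (p.2 : H) + (p.1 : ℝ) • T (p.2 : H)
  have hF₁c : Continuous F₁ := by
    apply Continuous.add
    · exact (continuous_const.sub (continuous_subtype_val.comp continuous_fst)).smul
        (continuous_subtype_val.comp continuous_snd)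
    · exact (continuous_subtype_val.comp continuous_fst).smul
        (T.continuous.comp (continuous_subtype_val.comp continuous_snd))
  have hF₁0 : ∀ p, F₁ p ≠ 0 := by
    rintro ⟨t, x⟩ hp
    have hp : (1 - (t:ℝ)) • (x:H) + (t:ℝ) • T (x:H) = 0 := hp
    have ht0 : (0:ℝ) ≤ (t:ℝ) := t.2.1
    have ht1 : (t:ℝ) ≤ 1 := t.2.2
    have hhalf : (t : ℝ) = 1/2 := by
      have h1 : (1 - (t:ℝ)) • (x:H) = -((t:ℝ) • T (x:H)) :=
        eq_neg_of_add_eq_zero_left hp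
      have h2 : ‖(1 - (t:ℝ)) • (x:H)‖ = ‖(t:ℝ) • T (x:H)‖ := by rw [h1, norm_neg]
      rw [norm_smul, norm_smul, hnorm x, hTnorm x, mul_one, mul_one,
        Real.norm_eq_abs, Real.norm_eq_abs, abs_of_nonneg (by linarith),
        abs_of_nonneg ht0] at h2
      linarith
    apply hT (x:H) (hne x)
    have hp' : (1/2 : ℝ) • ((x:H) + T (x:H)) = 0 := by
      rw [hhalf] at hp
      rw [smul_add, ← hp]
      norm_num
    have h3 := (smul_eq_zero.mp hp').resolve_left (by norm_num)
    exact eq_neg_of_add_eq_zero_right h3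
  -- second homotopy : g₁ to the constant pt
  let F₂ : unitInterval × S → H := fun p => (1 - (p.1 : ℝ)) • T (p.2 : H) + (p.1 : ℝ) • e
  have hF₂c : Continuous F₂ := by
    apply Continuous.add
    · exact (continuous_const.sub (continuous_subtype_val.comp continuous_fst)).smul
        (T.continuous.comp (continuous_subtype_val.comp continuous_snd))
    · exact (continuous_subtype_val.comp continuous_fst).smul continuous_const
  have hF₂0 : ∀ p, F₂ p ≠ 0 := by
    rintro ⟨t, x⟩ hp
    have hp : (1 - (t:ℝ)) • T (x:H) + (t:ℝ) • e = 0 := hp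
    have ht0 : (0:ℝ) ≤ (t:ℝ) := t.2.1
    have ht1 : (t:ℝ) ≤ 1 := t.2.2
    have hinner : ⟪(1 - (t:ℝ)) • T (x:H), (t:ℝ) • e⟫ = 0 := by
      rw [real_inner_smul_left, real_inner_smul_right, real_inner_comm, hTe]
      ring
    have hsq := norm_add_sq_eq_norm_sq_add_norm_sq_of_inner_eq_zero _ _ hinner
    rw [hp, norm_zero] at hsq
    simp only [norm_smul, hTnorm x, he, mul_one, Real.norm_eq_abs,
      abs_of_nonneg (show (0:ℝ) ≤ 1 - (t:ℝ) by linarith), abs_of_nonneg ht0] at hsq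
    nlinarith [sq_nonneg (2*(t:ℝ) - 1)]
  let H₁ : ContinuousMap.Homotopy (ContinuousMap.id S) g₁ :=
    { toFun := fun p => sphNormalize (F₁ p) (hF₁0 p)
      continuous_toFun := continuous_sphNormalize hF₁c hF₁0
      map_zero_left := by
        intro x
        apply Subtype.ext
        show ‖F₁ (0, x)‖⁻¹ • F₁ (0, x) = (x : H)
        have h0 : F₁ (0, x) = (x : H) := by simp [F₁]
        rw [h0, hnorm x, inv_one, one_smul]
      map_one_left := by
        intro x
        apply Subtype.ext
        show ‖F₁ (1, x)‖⁻¹ • F₁ (1, x) = T (x : H)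
        have h0 : F₁ (1, x) = T (x : H) := by simp [F₁]
        rw [h0, hTnorm x, inv_one, one_smul] }
  let H₂ : ContinuousMap.Homotopy g₁ (ContinuousMap.const S pt) :=
    { toFun := fun p => sphNormalize (F₂ p) (hF₂0 p)
      continuous_toFun := continuous_sphNormalize hF₂c hF₂0
      map_zero_left := by
        intro x
        apply Subtype.ext
        show ‖F₂ (0, x)‖⁻¹ • F₂ (0, x) = T (x : H)
        have h0 : F₂ (0, x) = T (x : H) := by simp [F₂]
        rw [h0, hTnorm x, inv_one, one_smul]
      map_one_left := by
        intro x
        apply Subtype.ext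
        show ‖F₂ (1, x)‖⁻¹ • F₂ (1, x) = e
        have h0 : F₂ (1, x) = e := by simp [F₂]
        rw [h0, he, inv_one, one_smul] }
  have : (ContinuousMap.id S).Nullhomotopic := ⟨pt, ⟨H₁.trans H₂⟩⟩
  exact (contractible_iff_id_nullhomotopic S).mpr this
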